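/- Let a > 0. There exist constants 0 < c ≤ C < ∞, depending only on a and the dimension n, such that whenever an admissible ball B(x,r) ∈ 𝓑_a has non-empty intersection with a cube Q ∈ Δ^γ_0 with centre c_Q, then for every y ∈ B(x,r) one has c·exp(-|c_Q|²/2) ≤ exp(-|y|²/2) ≤ C·exp(-|c_Q|²/2). -/

import Mathlib

open MeasureTheory Metric Set
open scoped ENNReal NNReal BigOperators

noncomputable section

/-- The gaussian measure `dγ(x) = (2π)^{-n/2} exp(-|x|²/2) dx` on `ℝⁿ`. -/
def gaussMeasure (n : ℕ) : Measure (EuclideanSpace ℝ (Fin n)) :=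
  volume.withDensity fun x =>
    ENNReal.ofReal ((2 * Real.pi) ^ (-(n : ℝ) / 2) * Real.exp (-‖x‖ ^ 2 / 2))

/-- `m(x) = min {1, 1/‖x‖}`. -/
def mfun {n : ℕ} (x : EuclideanSpace ℝ (Fin n)) : ℝ :=
  if ‖x‖ ≤ 1 then 1 else ‖x‖⁻¹

/-- Ornstein–Uhlenbeck (Mehler) semigroup `e^{-tL} u (x)`. -/
def mehler (n : ℕ) (u : EuclideanSpace ℝ (Fin n) → ℝ) (t : ℝ)
    (x : EuclideanSpace ℝ (Fin n)) : ℝ :=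
  ∫ y, u (Real.exp (-t) • x + Real.sqrt (1 - Real.exp (-2 * t)) • y) ∂gaussMeasure n

/-- The gaussian conical square function `S_a u (x)`. -/
def Sfun (n : ℕ) (a : ℝ) (u : EuclideanSpace ℝ (Fin n) → ℝ)
    (x : EuclideanSpace ℝ (Fin n)) : ℝ≥0∞ :=
  (∫⁻ t in Set.Ioo (0 : ℝ) (a * mfun x),
      (∫⁻ y in ball x t,
        (gaussMeasure n (ball y t))⁻¹ *
          ENNReal.ofReal ((t * ‖fderiv ℝ (mehler n u (t ^ 2)) y‖) ^ 2) ∂gaussMeasure n) /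
        ENNReal.ofReal t) ^ (1 / 2 : ℝ)

/-- The gaussian non-tangential maximal function `T*_{(A,a)} u (x)`. -/
def Tstar (n : ℕ) (A a : ℝ) (u : EuclideanSpace ℝ (Fin n) → ℝ)
    (x : EuclideanSpace ℝ (Fin n)) : ℝ≥0∞ :=
  ⨆ (y : EuclideanSpace ℝ (Fin n)) (t : ℝ) (_ : dist y x < A * t) (_ : 0 < t)
      (_ : t < a * mfun x),
    ((gaussMeasure n (ball y (A * t)))⁻¹ *
        ∫⁻ z in ball y (A * t), ENNReal.ofReal ((mehler n u (t ^ 2) z) ^ 2) ∂gaussMeasure n) ^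
      (1 / 2 : ℝ)

/-- The admissible (gaussian) Hardy–Littlewood maximal function `M*_a f (x)`. -/
def Mstar (n : ℕ) (a : ℝ) (f : EuclideanSpace ℝ (Fin n) → ℝ)
    (x : EuclideanSpace ℝ (Fin n)) : ℝ≥0∞ :=
  ⨆ (r : ℝ) (_ : 0 < r) (_ : r ≤ a * mfun x),
    (gaussMeasure n (ball x r))⁻¹ *
      ∫⁻ y in ball x r, ENNReal.ofReal |f y| ∂gaussMeasure n

/-- The admissible cone `Γ^{(A,a)}_x(γ)`. -/
def cone (n : ℕ) (A a : ℝ) (x : EuclideanSpace ℝ (Fin n)) :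
    Set (EuclideanSpace ℝ (Fin n) × ℝ) :=
  {p | dist p.1 x < A * p.2 ∧ 0 < p.2 ∧ p.2 < a * mfun x}

/-- The modified admissible cone `Γ̃^{(A,a)}_x(γ)`. -/
def coneT (n : ℕ) (A a : ℝ) (x : EuclideanSpace ℝ (Fin n)) :
    Set (EuclideanSpace ℝ (Fin n) × ℝ) :=
  {p | dist p.1 x < A * p.2 ∧ 0 < p.2 ∧ p.2 < a * mfun p.1}

/-- The dyadic cube `2^{-k}(v + [0,1)ⁿ)` of scale `k`. -/
def dyadicCube (n k : ℕ) (v : Fin n → ℤ) : Set (EuclideanSpace ℝ (Fin n)) :=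
  {x | ∀ i, x i ∈ Set.Ico ((2 : ℝ) ^ (-(k : ℤ)) * v i) ((2 : ℝ) ^ (-(k : ℤ)) * (v i + 1))}

/-- The centre of the dyadic cube `2^{-k}(v + [0,1)ⁿ)`. -/
def cubeCenter (n k : ℕ) (v : Fin n → ℤ) : EuclideanSpace ℝ (Fin n) :=
  WithLp.toLp 2 (fun i => (2 : ℝ) ^ (-(k : ℤ)) * (v i + 1 / 2))

/-- The layers `L_0 = [-1,1)ⁿ`, `L_l = [-2^l,2^l)ⁿ \ [-2^{l-1},2^{l-1})ⁿ`. -/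
def layer (n : ℕ) : ℕ → Set (EuclideanSpace ℝ (Fin n))
  | 0 => {x | ∀ i, x i ∈ Set.Ico (-1 : ℝ) 1}
  | (l + 1) =>
      {x | ∀ i, x i ∈ Set.Ico (-(2 : ℝ) ^ (l + 1)) ((2 : ℝ) ^ (l + 1))} \
        {x | ∀ i, x i ∈ Set.Ico (-(2 : ℝ) ^ l) ((2 : ℝ) ^ l)}

/-- The cube `α ∘ Q` with the same centre as `Q = 2^{-k}(v + [0,1)ⁿ)` and `α` times
its side-length. -/
def scaledCube (n k : ℕ) (v : Fin n → ℤ) (α : ℝ) : Set (EuclideanSpace ℝ (Fin n)) :=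
  {x | ∀ i, x i ∈ Set.Ico (cubeCenter n k v i - α * (2 : ℝ) ^ (-(k : ℤ)) / 2)
      (cubeCenter n k v i + α * (2 : ℝ) ^ (-(k : ℤ)) / 2)}

/-- The Ornstein–Uhlenbeck operator `Lf(x) = -Δf(x) + x·∇f(x)`. -/
def OU (n : ℕ) (f : EuclideanSpace ℝ (Fin n) → ℂ) (x : EuclideanSpace ℝ (Fin n)) : ℂ :=
  -(∑ i : Fin n, iteratedFDeriv ℝ 2 f x ![EuclideanSpace.single i 1, EuclideanSpace.single i 1]) +
    fderiv ℝ f x x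

/-! On the layer `L_l` a cube `Q ∈ Δ^γ_0` has side `2^{-l}` and centre `|c_Q| ≲ 2^l`, while an
admissible ball meeting `Q` has radius `≲ 2^{-l}`, since there `m ≈ 1/|x| ≈ 2^{-l}`. Hence
`|y - c_Q| ≲ 2^{-l}` on the ball, and `| |y|² - |c_Q|² | ≤ |y - c_Q| (|y - c_Q| + 2|c_Q|)` is
bounded by a constant depending only on `a` and `n`. -/

theorem norm_le_sqrt_card_mul_of_forall_abs_le {ι : Type*} [Fintype ι]
    {w : EuclideanSpace ℝ ι} {M : ℝ} (hM : 0 ≤ M) (h : ∀ i, |w i| ≤ M) :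
    ‖w‖ ≤ √(Fintype.card ι) * M := by
  rw [EuclideanSpace.norm_eq, ← Real.sqrt_sq hM, ← Real.sqrt_mul (Nat.cast_nonneg _)]
  refine Real.sqrt_le_sqrt ?_
  calc ∑ i, ‖w i‖ ^ 2 ≤ ∑ _i : ι, M ^ 2 :=
        Finset.sum_le_sum fun i _ => by
          rw [Real.norm_eq_abs]
          exact pow_le_pow_left₀ (abs_nonneg _) (h i) 2
    _ = Fintype.card ι * M ^ 2 := by simp

theorem abs_sq_norm_sub_sq_norm_le {E : Type*} [SeminormedAddCommGroup E] (y c : E) :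
    |‖y‖ ^ 2 - ‖c‖ ^ 2| ≤ ‖y - c‖ * (‖y - c‖ + 2 * ‖c‖) := by
  have hy : ‖y‖ ≤ ‖c‖ + ‖y - c‖ := norm_le_insert' y c
  rw [sq_sub_sq, abs_mul, abs_of_nonneg (by positivity : 0 ≤ ‖y‖ + ‖c‖), mul_comm]
  exact mul_le_mul (abs_norm_sub_norm_le y c) (by linarith) (by positivity) (norm_nonneg _)

theorem abs_sq_norm_sub_sq_norm_le_of_mul_le {E : Type*} [SeminormedAddCommGroup E] {y c : E}
    {P D M : ℝ} (hP : 1 ≤ P) (hM : 0 ≤ M) (hyc : P * ‖y - c‖ ≤ D) (hc : ‖c‖ ≤ M * P) :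
    |‖y‖ ^ 2 - ‖c‖ ^ 2| ≤ D * (D + 2 * M) := by
  have h₀ : 0 ≤ ‖y - c‖ := norm_nonneg _
  have h₁ : ‖y - c‖ ≤ D := le_trans (le_mul_of_one_le_left h₀ hP) hyc
  have h₂ : ‖y - c‖ * ‖c‖ ≤ M * D := by
    calc ‖y - c‖ * ‖c‖ ≤ ‖y - c‖ * (M * P) := by gcongr
      _ = M * (P * ‖y - c‖) := by ring
      _ ≤ M * D := by gcongr
  calc |‖y‖ ^ 2 - ‖c‖ ^ 2| ≤ ‖y - c‖ * (‖y - c‖ + 2 * ‖c‖) := abs_sq_norm_sub_sq_norm_le y c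
    _ = ‖y - c‖ * ‖y - c‖ + 2 * (‖y - c‖ * ‖c‖) := by ring
    _ ≤ D * D + 2 * (M * D) := by gcongr; exact h₀.trans h₁
    _ = D * (D + 2 * M) := by ring

theorem exp_neg_half_le_and_le_of_abs_sub_le {u v K : ℝ} (h : |u - v| ≤ 2 * K) :
    Real.exp (-K) * Real.exp (-v / 2) ≤ Real.exp (-u / 2) ∧
      Real.exp (-u / 2) ≤ Real.exp K * Real.exp (-v / 2) := by
  obtain ⟨h₁, h₂⟩ := abs_le.mp h
  simp only [← Real.exp_add, Real.exp_le_exp]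
  constructor <;> linarith

section Mfun

variable {n : ℕ} (x : EuclideanSpace ℝ (Fin n))

theorem mfun_le_one : mfun x ≤ 1 := by
  unfold mfun
  split_ifs with h
  · rfl
  · exact inv_le_one_of_one_le₀ (not_le.mp h).le

theorem mfun_mul_norm_le_one : mfun x * ‖x‖ ≤ 1 := by
  unfold mfun
  split_ifs with h
  · simpa using h
  · rw [inv_mul_cancel₀ (by linarith [not_le.mp h])]

theorem mul_norm_le_of_mem_ball_of_le_mul_mfun {a r : ℝ} (ha : 0 ≤ a)
    {z : EuclideanSpace ℝ (Fin n)} (hz : z ∈ ball x r) (hr : r ≤ a * mfun x) :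
    r * ‖z‖ ≤ a * (a + 1) := by
  have hr₀ : 0 ≤ r := (pos_of_mem_ball hz).le
  have hra : r ≤ a := hr.trans (mul_le_of_le_one_right ha (mfun_le_one x))
  have hrx : r * ‖x‖ ≤ a := by
    calc r * ‖x‖ ≤ a * mfun x * ‖x‖ := by gcongr
      _ = a * (mfun x * ‖x‖) := mul_assoc _ _ _
      _ ≤ a := mul_le_of_le_one_right ha (mfun_mul_norm_le_one x)
  have hzx : ‖z‖ ≤ ‖x‖ + r := by
    have := norm_sub_norm_le z x
    linarith [mem_ball_iff_norm.mp hz]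
  calc r * ‖z‖ ≤ r * (‖x‖ + r) := by gcongr
    _ ≤ a * (a + 1) := by nlinarith

end Mfun

section DyadicCube

variable {n : ℕ}

theorem cubeCenter_mem_dyadicCube (k : ℕ) (v : Fin n → ℤ) :
    cubeCenter n k v ∈ dyadicCube n k v := by
  intro i
  have h : (0 : ℝ) < 2 ^ (-(k : ℤ)) := by positivity
  simp only [cubeCenter, mem_Ico]
  constructor
  · exact mul_le_mul_of_nonneg_left (by linarith) h.le
  · exact mul_lt_mul_of_pos_left (by linarith) h

theorem norm_sub_le_of_mem_dyadicCube {k : ℕ} {v : Fin n → ℤ} {z w : EuclideanSpace ℝ (Fin n)}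
    (hz : z ∈ dyadicCube n k v) (hw : w ∈ dyadicCube n k v) :
    ‖z - w‖ ≤ √n * 2 ^ (-(k : ℤ)) := by
  have hcoord : ∀ i, |(z - w) i| ≤ 2 ^ (-(k : ℤ)) := fun i => by
    obtain ⟨hz₁, hz₂⟩ := hz i
    obtain ⟨hw₁, hw₂⟩ := hw i
    rw [PiLp.sub_apply, abs_le]
    constructor <;> linarith
  simpa using norm_le_sqrt_card_mul_of_forall_abs_le (by positivity) hcoord

theorem abs_apply_le_of_mem_layer {l : ℕ} {x : EuclideanSpace ℝ (Fin n)} (hx : x ∈ layer n l)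
    (i : Fin n) : |x i| ≤ 2 ^ l := by
  cases l with
  | zero => exact abs_le.mpr ⟨by simpa using (hx i).1, by simpa using (hx i).2.le⟩
  | succ l => exact abs_le.mpr ⟨by simpa using (hx.1 i).1, (hx.1 i).2.le⟩

theorem norm_le_of_mem_layer {l : ℕ} {x : EuclideanSpace ℝ (Fin n)} (hx : x ∈ layer n l) :
    ‖x‖ ≤ √n * 2 ^ l := by
  simpa using
    norm_le_sqrt_card_mul_of_forall_abs_le (by positivity) (abs_apply_le_of_mem_layer hx)

theorem two_pow_le_norm_of_mem_layer_succ {l : ℕ} {x : EuclideanSpace ℝ (Fin n)}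
    (hx : x ∈ layer n (l + 1)) : 2 ^ l ≤ ‖x‖ := by
  obtain ⟨i, hi⟩ := not_forall.mp hx.2
  have h₀ : (0 : ℝ) < 2 ^ l := by positivity
  have hxi : 2 ^ l ≤ |x i| := by
    rw [mem_Ico, not_and_or, not_le, not_lt] at hi
    rcases hi with hi | hi
    · rw [abs_of_neg (by linarith)]; linarith
    · rw [abs_of_nonneg (by linarith)]; exact hi
  exact hxi.trans (by simpa using PiLp.norm_apply_le x i)

theorem two_pow_mul_le_of_mem_layer {a r : ℝ} (ha : 0 ≤ a) {l : ℕ}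
    {x z : EuclideanSpace ℝ (Fin n)} (hzl : z ∈ layer n l) (hz : z ∈ ball x r)
    (hr : r ≤ a * mfun x) : 2 ^ l * r ≤ 2 * a * (a + 1) := by
  have hr₀ : 0 ≤ r := (pos_of_mem_ball hz).le
  cases l with
  | zero =>
    have hra : r ≤ a := hr.trans (mul_le_of_le_one_right ha (mfun_le_one x))
    nlinarith
  | succ l =>
    have hzr := mul_norm_le_of_mem_ball_of_le_mul_mfun x ha hz hr
    calc 2 ^ (l + 1) * r = 2 * (2 ^ l * r) := by ring
      _ ≤ 2 * (‖z‖ * r) := by gcongr; exact two_pow_le_norm_of_mem_layer_succ hzl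
      _ ≤ 2 * a * (a + 1) := by linarith

theorem two_pow_mul_norm_sub_cubeCenter_le {l : ℕ} {v : Fin n → ℤ} {r : ℝ}
    {x y z : EuclideanSpace ℝ (Fin n)} (hy : y ∈ ball x r) (hz : z ∈ ball x r)
    (hzQ : z ∈ dyadicCube n l v) :
    2 ^ l * ‖y - cubeCenter n l v‖ ≤ 2 * (2 ^ l * r) + √n := by
  have hyz : ‖y - z‖ < 2 * r := by
    rw [← dist_eq_norm]
    linarith [dist_triangle_right y z x, mem_ball.mp hy, mem_ball.mp hz]
  have hzc := norm_sub_le_of_mem_dyadicCube hzQ (cubeCenter_mem_dyadicCube l v)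
  have hcancel : (2 : ℝ) ^ l * 2 ^ (-(l : ℤ)) = 1 := by
    rw [zpow_neg, zpow_natCast, mul_inv_cancel₀ (by positivity)]
  calc 2 ^ l * ‖y - cubeCenter n l v‖
      ≤ 2 ^ l * (2 * r + √n * 2 ^ (-(l : ℤ))) := by
        gcongr
        linarith [norm_sub_le_norm_sub_add_norm_sub y z (cubeCenter n l v)]
    _ = 2 * (2 ^ l * r) + √n * (2 ^ l * 2 ^ (-(l : ℤ))) := by ring
    _ = 2 * (2 ^ l * r) + √n := by rw [hcancel, mul_one]

end DyadicCube

/-- on an admissible ball meeting a cube `Q ∈ Δ^γ_0`, the gaussian density is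
comparable to its value at the centre of the cube. -/
theorem gaussian_density_comparable (n : ℕ) (a : ℝ) (ha : 0 < a) :
    ∃ c > (0 : ℝ), ∃ C > (0 : ℝ), c ≤ C ∧
      ∀ (x : EuclideanSpace ℝ (Fin n)) (r : ℝ) (l : ℕ) (v : Fin n → ℤ),
        0 ≤ r → r ≤ a * mfun x → dyadicCube n l v ⊆ layer n l →
        (ball x r ∩ dyadicCube n l v).Nonempty →
        ∀ y ∈ ball x r,
          c * Real.exp (-‖cubeCenter n l v‖ ^ 2 / 2) ≤ Real.exp (-‖y‖ ^ 2 / 2) ∧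
          Real.exp (-‖y‖ ^ 2 / 2) ≤ C * Real.exp (-‖cubeCenter n l v‖ ^ 2 / 2) := by
  set D := 2 * (2 * a * (a + 1)) + √n
  set K := D * (D + 2 * √n) / 2 with hK
  have hK₀ : 0 ≤ K := by positivity
  refine ⟨Real.exp (-K), Real.exp_pos _, Real.exp K, Real.exp_pos _,
    Real.exp_le_exp.mpr (by linarith), ?_⟩
  rintro x r l v - hr hQ ⟨z, hz, hzQ⟩ y hy
  have hscale := two_pow_mul_le_of_mem_layer ha.le (hQ hzQ) hz hr
  have hyc := two_pow_mul_norm_sub_cubeCenter_le hy hz hzQ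
  have hc := norm_le_of_mem_layer (hQ (cubeCenter_mem_dyadicCube l v))
  have hsq := abs_sq_norm_sub_sq_norm_le_of_mul_le (one_le_pow₀ one_le_two) (Real.sqrt_nonneg n)
    (hyc.trans (by linarith : _ ≤ D)) hc
  simpa only [neg_div] using exp_neg_half_le_and_le_of_abs_sub_le (hsq.trans_eq (by rw [hK]; ring))

end
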